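/- arXiv:0807.2931 — 3 statements merged into one kernel-verified Lean document; each statement's English description precedes it below -/
import Mathlib

section
/- In the quadratic Crawford–Sobel model with uniform prior on [0,1] and bias b > 0, a partition equilibrium with n segments exists if and only if 2n(n-1)b < 1; consequently the number of segments in any equilibrium is bounded above by the largest integer n satisfying n(n-1) < 1/(2b), so only finitely many equilibrium partition sizes exist. -/
/-!
Solving the second-order recurrence gives `a i = i * a 1 + 2 i (i - 1) b`, so the boundary
condition `a n = 1` forces `a 1 = (1 - 2 n (n - 1) b) / n`. An increasing partition needs
`a 1 > 0`, i.e. `2 n (n - 1) b < 1`; conversely, for `b ≥ 0` the gaps `a 1 + 4 i b` of the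
closed form are then all positive.
-/

/-- The boundary points `a 0 = 0 < a 1 < ⋯ < a n = 1` of an `n`-segment partition equilibrium,
related by the indifference condition of the quadratic uniform Crawford–Sobel model. -/
def IsPartitionEquilibrium (b : ℝ) (n : ℕ) (a : ℕ → ℝ) : Prop :=
  a 0 = 0 ∧ a n = 1 ∧ (∀ i < n, a i < a (i + 1)) ∧
    ∀ i, 1 ≤ i → i ≤ n - 1 → a (i + 1) = 2 * a i - a (i - 1) + 4 * b

section Recurrence

variable {R : Type*} [CommRing R]

def partitionBoundary (a₁ b : R) (i : ℕ) : R := i * a₁ + 2 * i * (i - 1) * b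

theorem partitionBoundary_succ (a₁ b : R) {i : ℕ} (hi : 1 ≤ i) :
    partitionBoundary a₁ b (i + 1) =
      2 * partitionBoundary a₁ b i - partitionBoundary a₁ b (i - 1) + 4 * b := by
  obtain ⟨k, rfl⟩ := Nat.exists_eq_add_of_le' hi
  simp only [partitionBoundary, Nat.add_sub_cancel]
  push_cast
  ring

theorem eq_partitionBoundary_of_recurrence {n : ℕ} {a : ℕ → R} {b : R} (h₀ : a 0 = 0)
    (hrec : ∀ i, 1 ≤ i → i ≤ n - 1 → a (i + 1) = 2 * a i - a (i - 1) + 4 * b) :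
    ∀ i ≤ n, a i = partitionBoundary (a 1) b i
  | 0, _ => by simp [partitionBoundary, h₀]
  | 1, _ => by simp [partitionBoundary]
  | k + 2, hk => by
    rw [hrec (k + 1) (by omega) (by omega), partitionBoundary_succ _ _ (by omega),
      eq_partitionBoundary_of_recurrence h₀ hrec (k + 1) (by omega),
      eq_partitionBoundary_of_recurrence h₀ hrec (k + 1 - 1) (by omega)]

end Recurrence

theorem partitionBoundary_lt_succ {a₁ b : ℝ} (ha₁ : 0 < a₁) (hb : 0 ≤ b) (i : ℕ) :
    partitionBoundary a₁ b i < partitionBoundary a₁ b (i + 1) := by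
  have gap : partitionBoundary a₁ b (i + 1) - partitionBoundary a₁ b i = a₁ + 4 * i * b := by
    simp only [partitionBoundary]
    push_cast
    ring
  have : 0 ≤ 4 * (i : ℝ) * b := by positivity
  linarith

theorem exists_isPartitionEquilibrium_iff {b : ℝ} (hb : 0 ≤ b) {n : ℕ} (hn : 1 ≤ n) :
    (∃ a, IsPartitionEquilibrium b n a) ↔ 2 * (n : ℝ) * (n - 1) * b < 1 := by
  have hn' : (1 : ℝ) ≤ n := by exact_mod_cast hn
  constructor
  · rintro ⟨a, h₀, hn₁, hlt, hrec⟩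
    have ha₁ : 0 < a 1 := h₀ ▸ hlt 0 hn
    have hclosed := eq_partitionBoundary_of_recurrence h₀ hrec n le_rfl
    rw [hn₁, partitionBoundary] at hclosed
    have : 0 < (n : ℝ) * a 1 := by positivity
    linarith
  · intro h
    set a₁ := (1 - 2 * n * (n - 1) * b) / n with ha₁_def
    have ha₁ : 0 < a₁ := div_pos (by linarith) (by linarith)
    refine ⟨partitionBoundary a₁ b, by simp [partitionBoundary], ?_,
      fun i _ => partitionBoundary_lt_succ ha₁ hb i,
      fun i hi _ => partitionBoundary_succ a₁ b hi⟩
    rw [partitionBoundary, ha₁_def]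
    field_simp
    ring

/-- Existence of an n-segment partition equilibrium iff `2 n (n-1) b < 1`;
hence the number of segments of any equilibrium satisfies `n (n-1) < 1/(2b)`. -/
theorem stmt_2 (b : ℝ) (hb : 0 < b) (n : ℕ) (hn : 1 ≤ n) :
    ((∃ a : ℕ → ℝ, a 0 = 0 ∧ a n = 1 ∧ (∀ i < n, a i < a (i + 1)) ∧
        ∀ i, 1 ≤ i → i ≤ n - 1 → a (i + 1) = 2 * a i - a (i - 1) + 4 * b) ↔
      2 * (n : ℝ) * ((n : ℝ) - 1) * b < 1) ∧
    ((∃ a : ℕ → ℝ, a 0 = 0 ∧ a n = 1 ∧ (∀ i < n, a i < a (i + 1)) ∧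
        ∀ i, 1 ≤ i → i ≤ n - 1 → a (i + 1) = 2 * a i - a (i - 1) + 4 * b) →
      (n : ℝ) * ((n : ℝ) - 1) < 1 / (2 * b)) := by
  have key := exists_isPartitionEquilibrium_iff hb.le hn
  refine ⟨key, fun hex => ?_⟩
  rw [lt_div_iff₀ (by positivity)]
  linarith [key.mp hex]
end

section
/- In the quadratic Crawford–Sobel model with uniform prior on [0,1], in an n-segment partition equilibrium with boundary points a_i = i(1-2n(n-1)b)/n + 2i(i-1)b, the receiver's ex-ante expected utility equals -(1/(12n²)) - b²(n²-1)/3, which is strictly increasing in n (for n(n-1) < 1/(2b)); hence the equilibrium with the most segments ex-ante Pareto dominates, for the receiver, all equilibria with fewer segments. -/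
/-!
The segment lengths `a_{i+1} - a_i = 1/n - 2(n-1)b + 4ib` form an arithmetic progression with
mean `1/n` and step `4b`. Around the mean the odd central moments cancel, so the sum of cubes is
`n (1/n)^3 + 3 (1/n) (4b)^2 n (n^2-1)/12 = 1/n^2 + 4b^2(n^2-1)`. For `m < n` the difference of
the closed forms factors as `(n^2 - m^2)(1 - 4b^2m^2n^2) / (12m^2n^2)`, which is positive once
`2bmn < 1`; this follows from `m ≤ n - 1` and `n(n-1) < 1/(2b)`.
-/

open Finset

theorem sum_range_add_mul_pow_three (c d : ℝ) (k : ℕ) :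
    ∑ i ∈ range k, (c + i * d) ^ 3 =
      k * c ^ 3 + 3 / 2 * c ^ 2 * d * k * (k - 1) + 1 / 2 * c * d ^ 2 * k * (k - 1) * (2 * k - 1)
        + 1 / 4 * d ^ 3 * k ^ 2 * (k - 1) ^ 2 := by
  induction k with
  | zero => simp
  | succ k ih =>
    rw [sum_range_succ, ih]
    push_cast
    ring

/-- The boundary point `a_i` of the `n`-segment equilibrium with bias `b`. -/
noncomputable def cutoff (b : ℝ) (n i : ℕ) : ℝ :=
  i * (1 - 2 * n * (n - 1) * b) / n + 2 * i * (i - 1) * b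

theorem cutoff_succ_sub_cutoff (b : ℝ) {n : ℕ} (hn : n ≠ 0) (i : ℕ) :
    cutoff b n (i + 1) - cutoff b n i = (1 - 2 * n * (n - 1) * b) / n + i * (4 * b) := by
  unfold cutoff
  push_cast
  field_simp
  ring

theorem sum_range_cutoff_sub_pow_three (b : ℝ) {n : ℕ} (hn : n ≠ 0) :
    ∑ i ∈ range n, (cutoff b n (i + 1) - cutoff b n i) ^ 3 =
      1 / (n : ℝ) ^ 2 + 4 * b ^ 2 * ((n : ℝ) ^ 2 - 1) := by
  simp only [cutoff_succ_sub_cutoff b hn, sum_range_add_mul_pow_three]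
  field_simp
  ring

theorem receiver_payoff_lt {b m n : ℝ} (hm : 0 < m) (hmn : m < n) (hbmn : (2 * b * m * n) ^ 2 < 1) :
    -(1 / (12 * m ^ 2)) - b ^ 2 * (m ^ 2 - 1) / 3 < -(1 / (12 * n ^ 2)) - b ^ 2 * (n ^ 2 - 1) / 3 := by
  have hn : 0 < n := hm.trans hmn
  have hdiff : (-(1 / (12 * n ^ 2)) - b ^ 2 * (n ^ 2 - 1) / 3)
      - (-(1 / (12 * m ^ 2)) - b ^ 2 * (m ^ 2 - 1) / 3)
      = (n ^ 2 - m ^ 2) * (1 - (2 * b * m * n) ^ 2) / (12 * m ^ 2 * n ^ 2) := by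
    field_simp
    ring
  have hpos : 0 < (n ^ 2 - m ^ 2) * (1 - (2 * b * m * n) ^ 2) / (12 * m ^ 2 * n ^ 2) := by
    have hsq : m ^ 2 < n ^ 2 := by gcongr
    exact div_pos (mul_pos (by linarith) (by linarith)) (by positivity)
  linarith

/-- Receiver's ex-ante expected utility in the n-segment equilibrium equals
`-(1/(12 n^2)) - b^2 (n^2 - 1)/3`, strictly increasing in `n`. -/
theorem stmt_3 (b : ℝ) (hb : 0 < b)
    (a : ℕ → ℕ → ℝ)
    (ha : ∀ n i, a n i =
      (i : ℝ) * (1 - 2 * (n : ℝ) * ((n : ℝ) - 1) * b) / (n : ℝ)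
        + 2 * (i : ℝ) * ((i : ℝ) - 1) * b)
    (EU : ℕ → ℝ)
    (hEU : ∀ n, EU n = -∑ i ∈ Finset.range n, (a n (i + 1) - a n i) ^ 3 / 12) :
    (∀ n : ℕ, 1 ≤ n →
      EU n = -(1 / (12 * (n : ℝ) ^ 2)) - b ^ 2 * ((n : ℝ) ^ 2 - 1) / 3) ∧
    (∀ m n : ℕ, 1 ≤ m → m < n → (n : ℝ) * ((n : ℝ) - 1) < 1 / (2 * b) →
      EU m < EU n) := by
  have ha' : a = cutoff b := funext fun n => funext (ha n)
  have hEU_eq (n : ℕ) (hn : 1 ≤ n) :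
      EU n = -(1 / (12 * (n : ℝ) ^ 2)) - b ^ 2 * ((n : ℝ) ^ 2 - 1) / 3 := by
    rw [hEU, ha', ← sum_div, sum_range_cutoff_sub_pow_three b (by omega)]
    ring
  refine ⟨hEU_eq, fun m n hm hmn hbound => ?_⟩
  rw [hEU_eq m hm, hEU_eq n (hm.trans hmn.le)]
  have hm' : (1 : ℝ) ≤ m := by exact_mod_cast hm
  have hmn' : (m : ℝ) ≤ n - 1 := by
    rw [le_sub_iff_add_le]
    exact_mod_cast hmn
  have hbn : 2 * b * (n * (n - 1)) < 1 := by
    rwa [lt_div_iff₀ (by positivity), mul_comm] at hbound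
  have hbmn : 2 * b * m * n < 1 := by
    have : (m * n : ℝ) ≤ (n - 1) * n := by gcongr
    nlinarith
  exact receiver_payoff_lt (by positivity) (by exact_mod_cast hmn)
    ((sq_lt_one_iff₀ (by positivity)).2 hbmn)
end

section
/- DeGroot consensus: let k agents hold opinions p_i ∈ ℝ (or probability vectors) and update them by repeated averaging p(t+1) = W p(t), where W is a k×k row-stochastic matrix with all entries strictly positive. Then p(t) converges as t → ∞ to a consensus vector whose coordinates are all equal, namely the common value π^T p(0) where π is the unique stationary distribution of W (π^T W = π^T, π > 0, Σπ_i = 1). -/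
open Filter Finset

lemma degroot_key (k : ℕ) (hk : 0 < k)
    (W : Matrix (Fin k) (Fin k) ℝ)
    (hpos : ∀ i j, 0 < W i j) (hrow : ∀ i, ∑ j, W i j = 1)
    (v : Fin k → ℝ) :
    ∃ c : ℝ, Filter.Tendsto (fun t => (W ^ t).mulVec v) Filter.atTop
      (nhds fun _ => c) := by
  have hne : (Finset.univ : Finset (Fin k)).Nonempty := ⟨⟨0, hk⟩, Finset.mem_univ _⟩
  set ε : ℝ := Finset.univ.inf' hne (fun i => Finset.univ.inf' hne (fun j => W i j)) with hε
  have hεle : ∀ i j, ε ≤ W i j := by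
    intro i j
    exact le_trans (Finset.inf'_le _ (Finset.mem_univ i)) (Finset.inf'_le _ (Finset.mem_univ j))
  have hεpos : 0 < ε := by
    rw [hε, Finset.lt_inf'_iff]
    intro i _
    rw [Finset.lt_inf'_iff]
    intro j _
    exact hpos i j
  set r : ℝ := max (1 - 2 * ε) 0 with hr
  have hr0 : 0 ≤ r := le_max_right _ _
  have hr1 : r < 1 := by
    rw [hr]
    apply max_lt _ one_pos
    linarith
  -- convexity bounds
  have hconv : ∀ (u : Fin k → ℝ) (i : Fin k),
      Finset.univ.inf' hne u ≤ (W.mulVec u) i ∧ (W.mulVec u) i ≤ Finset.univ.sup' hne u := by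
    intro u i
    have h1 : ∑ j, W i j * (Finset.univ.inf' hne u) ≤ ∑ j, W i j * u j :=
      Finset.sum_le_sum fun j _ =>
        mul_le_mul_of_nonneg_left (Finset.inf'_le _ (Finset.mem_univ j)) (hpos i j).le
    have h2 : ∑ j, W i j * u j ≤ ∑ j, W i j * (Finset.univ.sup' hne u) :=
      Finset.sum_le_sum fun j _ =>
        mul_le_mul_of_nonneg_left (Finset.le_sup' _ (Finset.mem_univ j)) (hpos i j).le
    have e1 : ∑ j, W i j * (Finset.univ.inf' hne u) = Finset.univ.inf' hne u := by
      rw [← Finset.sum_mul, hrow, one_mul]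
    have e2 : ∑ j, W i j * (Finset.univ.sup' hne u) = Finset.univ.sup' hne u := by
      rw [← Finset.sum_mul, hrow, one_mul]
    constructor
    · rw [← e1]; exact h1
    · rw [← e2]; exact h2
  -- oscillation contraction
  have hosc : ∀ u : Fin k → ℝ,
      Finset.univ.sup' hne (W.mulVec u) - Finset.univ.inf' hne (W.mulVec u)
        ≤ r * (Finset.univ.sup' hne u - Finset.univ.inf' hne u) := by
    intro u
    set S := Finset.univ.sup' hne u with hS
    set m := Finset.univ.inf' hne u with hm
    have hmS : m ≤ S := by
      obtain ⟨i, _, hi⟩ := Finset.exists_mem_eq_inf' hne u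
      rw [hm, hi]
      exact Finset.le_sup' _ (Finset.mem_univ i)
    obtain ⟨j0, _, hj0⟩ := Finset.exists_mem_eq_inf' hne u
    obtain ⟨j1, _, hj1⟩ := Finset.exists_mem_eq_sup' hne u
    -- upper bound on each entry of W.mulVec u
    have hup : ∀ i, (W.mulVec u) i ≤ S - ε * (S - m) := by
      intro i
      have hsplit : ∑ j, W i j * u j
          = W i j0 * u j0 + ∑ j ∈ Finset.univ.erase j0, W i j * u j :=
        (Finset.add_sum_erase _ _ (Finset.mem_univ j0)).symm
      have hsplit2 : ∑ j, W i j = W i j0 + ∑ j ∈ Finset.univ.erase j0, W i j :=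
        (Finset.add_sum_erase _ _ (Finset.mem_univ j0)).symm
      have hb : ∑ j ∈ Finset.univ.erase j0, W i j * u j
          ≤ ∑ j ∈ Finset.univ.erase j0, W i j * S :=
        Finset.sum_le_sum fun j _ =>
          mul_le_mul_of_nonneg_left (Finset.le_sup' _ (Finset.mem_univ j)) (hpos i j).le
      have hsum : ∑ j ∈ Finset.univ.erase j0, W i j = 1 - W i j0 := by
        have := hrow i
        rw [hsplit2] at this
        linarith
      have : (W.mulVec u) i ≤ W i j0 * m + (1 - W i j0) * S := by
        show ∑ j, W i j * u j ≤ _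
        rw [hsplit, ← hj0]
        calc W i j0 * m + ∑ j ∈ Finset.univ.erase j0, W i j * u j
            ≤ W i j0 * m + ∑ j ∈ Finset.univ.erase j0, W i j * S := by linarith
          _ = W i j0 * m + (1 - W i j0) * S := by rw [← Finset.sum_mul, hsum]
      have hεj : ε ≤ W i j0 := hεle i j0
      nlinarith [sub_nonneg.mpr hmS]
    have hdn : ∀ i, m + ε * (S - m) ≤ (W.mulVec u) i := by
      intro i
      have hsplit : ∑ j, W i j * u j
          = W i j1 * u j1 + ∑ j ∈ Finset.univ.erase j1, W i j * u j :=
        (Finset.add_sum_erase _ _ (Finset.mem_univ j1)).symm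
      have hsplit2 : ∑ j, W i j = W i j1 + ∑ j ∈ Finset.univ.erase j1, W i j :=
        (Finset.add_sum_erase _ _ (Finset.mem_univ j1)).symm
      have hb : ∑ j ∈ Finset.univ.erase j1, W i j * m
          ≤ ∑ j ∈ Finset.univ.erase j1, W i j * u j :=
        Finset.sum_le_sum fun j _ =>
          mul_le_mul_of_nonneg_left (Finset.inf'_le _ (Finset.mem_univ j)) (hpos i j).le
      have hsum : ∑ j ∈ Finset.univ.erase j1, W i j = 1 - W i j1 := by
        have := hrow i
        rw [hsplit2] at this
        linarith
      have : W i j1 * S + (1 - W i j1) * m ≤ (W.mulVec u) i := by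
        show _ ≤ ∑ j, W i j * u j
        rw [hsplit, ← hj1]
        calc W i j1 * S + (1 - W i j1) * m
            = W i j1 * S + ∑ j ∈ Finset.univ.erase j1, W i j * m := by
              rw [← Finset.sum_mul, hsum]
          _ ≤ W i j1 * S + ∑ j ∈ Finset.univ.erase j1, W i j * u j := by linarith
      have hεj : ε ≤ W i j1 := hεle i j1
      nlinarith [sub_nonneg.mpr hmS]
    have h1 : Finset.univ.sup' hne (W.mulVec u) ≤ S - ε * (S - m) :=
      Finset.sup'_le _ _ fun i _ => hup i
    have h2 : m + ε * (S - m) ≤ Finset.univ.inf' hne (W.mulVec u) :=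
      Finset.le_inf' _ _ fun i _ => hdn i
    have h3 : Finset.univ.sup' hne (W.mulVec u) - Finset.univ.inf' hne (W.mulVec u)
        ≤ (1 - 2 * ε) * (S - m) := by linarith
    have h4 : (1 - 2 * ε) * (S - m) ≤ r * (S - m) :=
      mul_le_mul_of_nonneg_right (le_max_left _ _) (sub_nonneg.mpr hmS)
    linarith
  -- the sequences
  set a : ℕ → Fin k → ℝ := fun t => (W ^ t).mulVec v with ha
  set m : ℕ → ℝ := fun t => Finset.univ.inf' hne (a t) with hmdef
  set S : ℕ → ℝ := fun t => Finset.univ.sup' hne (a t) with hSdef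
  have hstep : ∀ t, a (t + 1) = W.mulVec (a t) := by
    intro t
    rw [ha]
    simp only
    rw [pow_succ', ← Matrix.mulVec_mulVec]
  have hmono : Monotone m := by
    apply monotone_nat_of_le_succ
    intro t
    rw [hmdef]
    simp only
    apply Finset.le_inf'
    intro i _
    rw [hstep t]
    exact (hconv (a t) i).1
  have hanti : ∀ t, S (t + 1) ≤ S t := by
    intro t
    rw [hSdef]
    simp only
    apply Finset.sup'_le
    intro i _
    rw [hstep t]
    exact (hconv (a t) i).2
  have hmS : ∀ t, m t ≤ S t := by
    intro t
    obtain ⟨i, _, hi⟩ := Finset.exists_mem_eq_inf' hne (a t)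
    rw [hmdef, hSdef]
    simp only
    rw [hi]
    exact Finset.le_sup' _ (Finset.mem_univ i)
  have hgap : ∀ t, S t - m t ≤ r ^ t * (S 0 - m 0) := by
    intro t
    induction t with
    | zero => simp
    | succ n ih =>
        calc S (n + 1) - m (n + 1) ≤ r * (S n - m n) := by
              rw [hSdef, hmdef]
              simp only
              rw [hstep n]
              exact hosc (a n)
          _ ≤ r * (r ^ n * (S 0 - m 0)) := mul_le_mul_of_nonneg_left ih hr0
          _ = r ^ (n + 1) * (S 0 - m 0) := by ring
  have hSanti : ∀ t, S t ≤ S 0 := by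
    intro t
    induction t with
    | zero => exact le_refl _
    | succ n ih => exact le_trans (hanti n) ih
  have hbdd : BddAbove (Set.range m) := by
    refine ⟨S 0, ?_⟩
    rintro x ⟨t, rfl⟩
    exact le_trans (hmS t) (hSanti t)
  set c : ℝ := ⨆ t, m t with hc
  have hmlim : Tendsto m atTop (nhds c) := tendsto_atTop_ciSup hmono hbdd
  have hgap0 : Tendsto (fun t => S t - m t) atTop (nhds 0) := by
    have hrt : Tendsto (fun t : ℕ => r ^ t * (S 0 - m 0)) atTop (nhds 0) := by
      have := (tendsto_pow_atTop_nhds_zero_of_lt_one hr0 hr1).mul_const (S 0 - m 0)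
      simpa using this
    apply tendsto_of_tendsto_of_tendsto_of_le_of_le' tendsto_const_nhds hrt
    · exact Eventually.of_forall fun t => sub_nonneg.mpr (hmS t)
    · exact Eventually.of_forall fun t => hgap t
  have hSlim : Tendsto S atTop (nhds c) := by
    have := hgap0.add hmlim
    simp only [zero_add] at this
    convert this using 2 with t
    ring
  refine ⟨c, ?_⟩
  rw [tendsto_pi_nhds]
  intro i
  apply tendsto_of_tendsto_of_tendsto_of_le_of_le' hmlim hSlim
  · exact Eventually.of_forall fun t => Finset.inf'_le _ (Finset.mem_univ i)
  · exact Eventually.of_forall fun t => Finset.le_sup' _ (Finset.mem_univ i)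

/-- DeGroot consensus: for a positive row-stochastic matrix `W`, repeated
averaging converges to a consensus whose common value is `πᵀ p(0)` for the
unique stationary distribution `π`. -/
theorem stmt_14 (k : ℕ) (hk : 0 < k)
    (W : Matrix (Fin k) (Fin k) ℝ)
    (hpos : ∀ i j, 0 < W i j) (hrow : ∀ i, ∑ j, W i j = 1)
    (p0 : Fin k → ℝ) :
    ∃! π : Fin k → ℝ,
      (∀ i, 0 < π i) ∧ (∑ i, π i = 1) ∧
      (∀ j, ∑ i, π i * W i j = π j) ∧
      Filter.Tendsto (fun t => (W ^ t).mulVec p0) Filter.atTop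
        (nhds fun _ => ∑ i, π i * p0 i) := by
  have hne : (Finset.univ : Finset (Fin k)).Nonempty := ⟨⟨0, hk⟩, Finset.mem_univ _⟩
  set i0 : Fin k := ⟨0, hk⟩ with hi0
  choose c hc using fun v => degroot_key k hk W hpos hrow v
  set π : Fin k → ℝ := fun j => c (Pi.single j 1) with hπ
  have hentry : ∀ i j, Tendsto (fun t => (W ^ t) i j) atTop (nhds (π j)) := by
    intro i j
    have := (tendsto_pi_nhds.mp (hc (Pi.single j 1))) i
    simpa [Matrix.mulVec_single] using this
  have hlim : ∀ v : Fin k → ℝ, Tendsto (fun t => (W ^ t).mulVec v) atTop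
      (nhds fun _ => ∑ j, π j * v j) := by
    intro v
    rw [tendsto_pi_nhds]
    intro i
    have heq : ∀ t, ((W ^ t).mulVec v) i = ∑ j, (W ^ t) i j * v j := fun t => rfl
    simp only [heq]
    exact tendsto_finset_sum _ fun j _ => (hentry i j).mul_const (v j)
  -- positivity
  set ε : ℝ := Finset.univ.inf' hne (fun i => Finset.univ.inf' hne (fun j => W i j)) with hε
  have hεle : ∀ i j, ε ≤ W i j := fun i j =>
    le_trans (Finset.inf'_le _ (Finset.mem_univ i)) (Finset.inf'_le _ (Finset.mem_univ j))
  have hεpos : 0 < ε := by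
    rw [hε, Finset.lt_inf'_iff]
    intro i _
    rw [Finset.lt_inf'_iff]
    intro j _
    exact hpos i j
  have hpow : ∀ t, 1 ≤ t → ∀ i j, ε ≤ (W ^ t) i j := by
    intro t ht
    induction t, ht using Nat.le_induction with
    | base => intro i j; simpa using hεle i j
    | succ n hn ih =>
        intro i j
        have : (W ^ (n + 1)) i j = ∑ l, W i l * (W ^ n) l j := by
          rw [pow_succ']
          rfl
        rw [this]
        calc ε = ∑ l, W i l * ε := by rw [← Finset.sum_mul, hrow, one_mul]
          _ ≤ ∑ l, W i l * (W ^ n) l j :=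
            Finset.sum_le_sum fun l _ => mul_le_mul_of_nonneg_left (ih l j) (hpos i l).le
  have hπpos : ∀ j, 0 < π j := by
    intro j
    have h1 : ε ≤ π j := by
      apply ge_of_tendsto (hentry i0 j)
      filter_upwards [eventually_ge_atTop 1] with t ht
      exact hpow t ht i0 j
    linarith
  -- sum to one
  have hone : ∀ t, (W ^ t).mulVec (fun _ => (1 : ℝ)) = fun _ => (1 : ℝ) := by
    intro t
    induction t with
    | zero => simp [Matrix.one_mulVec]
    | succ n ih =>
        rw [pow_succ', ← Matrix.mulVec_mulVec, ih]
        funext i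
        show ∑ j, W i j * 1 = 1
        simp [hrow i]
  have hsum1 : ∑ j, π j = 1 := by
    have h1 := hlim (fun _ => (1 : ℝ))
    simp only [hone] at h1
    have h2 : (fun _ : Fin k => (1 : ℝ)) = fun _ => ∑ j, π j * 1 :=
      tendsto_nhds_unique tendsto_const_nhds h1
    have := congrFun h2 i0
    simpa using this.symm
  -- stationarity
  have hstat : ∀ j, ∑ i, π i * W i j = π j := by
    intro j
    have hA : Tendsto (fun t => ∑ l, (W ^ t) i0 l * W l j) atTop
        (nhds (∑ l, π l * W l j)) :=
      tendsto_finset_sum _ fun l _ => (hentry i0 l).mul_const (W l j)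
    have hB : ∀ t, ∑ l, (W ^ t) i0 l * W l j = (W ^ (t + 1)) i0 j := by
      intro t
      rw [pow_succ]
      rfl
    simp only [hB] at hA
    have hC : Tendsto (fun t => (W ^ (t + 1)) i0 j) atTop (nhds (π j)) :=
      (hentry i0 j).comp (tendsto_add_atTop_nat 1)
    exact tendsto_nhds_unique hA hC
  refine ⟨π, ⟨hπpos, hsum1, hstat, hlim p0⟩, ?_⟩
  rintro π' ⟨hp', hs', hst', -⟩
  funext j
  have hiter : ∀ t j, ∑ i, π' i * (W ^ t) i j = π' j := by
    intro t
    induction t with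
    | zero =>
        intro j
        simp [Matrix.one_apply]
    | succ n ih =>
        intro j
        have he : ∀ i, (W ^ (n + 1)) i j = ∑ l, (W ^ n) i l * W l j := by
          intro i
          rw [pow_succ]
          rfl
        calc ∑ i, π' i * (W ^ (n + 1)) i j
            = ∑ i, ∑ l, π' i * ((W ^ n) i l * W l j) := by
              simp only [he, Finset.mul_sum]
          _ = ∑ l, (∑ i, π' i * (W ^ n) i l) * W l j := by
              rw [Finset.sum_comm]
              congr 1
              funext l
              rw [Finset.sum_mul]
              congr 1
              funext i
              ring
          _ = ∑ l, π' l * W l j := by simp only [ih]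
          _ = π' j := hst' j
  have hA : Tendsto (fun t => ∑ i, π' i * (W ^ t) i j) atTop
      (nhds (∑ i, π' i * π j)) :=
    tendsto_finset_sum _ fun i _ => (hentry i j).const_mul (π' i)
  simp only [hiter] at hA
  have hB : ∑ i, π' i * π j = π j := by
    rw [← Finset.sum_mul, hs', one_mul]
  rw [hB] at hA
  exact tendsto_nhds_unique tendsto_const_nhds hA
end
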